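/- Let F be a set of connected patterns over ℤ with alphabet A, and write F_n = {f ∈ F : |f| = n}. If Σ_{n≥1} |F_n|·(3/|A|)^n < 1/5, then h(X_F) > log(14|A|/15). -/

import Mathlib

/-!
For a finite window `T ⊆ ℤ` let `N(T)` count the patterns on `T` in which no forbidden word
occurs. If `∑_{f ∈ F} |f| γ^(1-|f|) ≤ |A| - γ`, then `N(T ∪ {g}) ≥ γ N(T)` for `g ∉ T`: among
the `|A| N(T)` one-site extensions, those creating an occurrence of `f` at one of the `|f|`
positions through `g` are determined by their restriction to `T` minus that occurrence, and by
induction there are at most `γ^(1-|f|) N(T)` of them. Hence `N(T) ≥ γ^|T|`. Comparing the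
windows `[-k, n+k)` with their centre `[0, n)` yields at least `γ^n` words of length `n` that
extend to arbitrarily large windows, and by compactness these occur in `X_F`; Fekete's lemma
then gives `h(X_F) ≥ log γ`. With `S` the sum in the hypothesis, `γ = |A| (1 - S/3)` exceeds
`14|A|/15` and satisfies the condition because `|f| ≤ (14/5)^(|f|-1)`.
-/

/-- A finite word `w` occurs in a bi-infinite configuration `x : ℤ → A` if some translate
of `w` matches `x`. -/
def occursIn {A : Type*} (w : List A) (x : ℤ → A) : Prop :=
  ∃ g : ℤ, ∀ i : ℕ, ∀ hi : i < w.length, x (g + i) = w.get ⟨i, hi⟩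

/-- The subshift over `ℤ` defined by the set of forbidden words `F`. -/
def zShift {A : Type*} (F : Set (List A)) : Set (ℤ → A) :=
  {x | ∀ w ∈ F, ¬ occursIn w x}

/-- The language of length-`n` words appearing in some configuration of `X`. -/
def lang {A : Type*} (X : Set (ℤ → A)) (n : ℕ) : Set (List A) :=
  {w | w.length = n ∧ ∃ x ∈ X, occursIn w x}

open Set Filter

lemma pow_card_mul_le_of_forall_insert {α : Type*} [DecidableEq α] {N : Finset α → ℝ}
    {γ : ℝ} (hγ : 0 ≤ γ) {T : Finset α}
    (hN : ∀ S ⊆ T, ∀ g ∈ T, g ∉ S → γ * N S ≤ N (insert g S)) {W : Finset α} (hW : W ⊆ T) :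
    γ ^ W.card * N (T \ W) ≤ N T := by
  induction W using Finset.induction_on with
  | empty => simp
  | insert w W hwW ih =>
    have hwT : w ∈ T := hW (Finset.mem_insert_self w W)
    have hstep := hN ((T \ W).erase w) ((Finset.erase_subset _ _).trans Finset.sdiff_subset) w hwT
      (Finset.notMem_erase w _)
    rw [Finset.insert_erase (Finset.mem_sdiff.2 ⟨hwT, hwW⟩)] at hstep
    calc γ ^ (insert w W).card * N (T \ insert w W)
        = γ ^ W.card * (γ * N ((T \ W).erase w)) := by
          rw [Finset.card_insert_of_notMem hwW, Finset.sdiff_insert]; ring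
      _ ≤ γ ^ W.card * N (T \ W) := by gcongr
      _ ≤ N T := ih ((Finset.subset_insert w W).trans hW)

lemma exists_forall_subset_of_antitone {α : Type*} {s : ℕ → Set α} (hs : Antitone s)
    (hfin : (s 0).Finite) : ∃ K, ∀ k, s K ⊆ s k := by
  refine ⟨Function.argmin fun k => (s k).ncard, fun k => ?_⟩
  rcases le_total k (Function.argmin fun k => (s k).ncard) with h | h
  · exact hs h
  · exact (eq_of_subset_of_ncard_le (hs h) (Function.argmin_le (fun k => (s k).ncard) k)
      (hfin.subset (hs (Nat.zero_le _)))).ge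

section Words

variable {A : Type*}

-- `occursIn w x` unfolds to `∃ s, MatchesAt w x s`.
def MatchesAt (w : List A) (x : ℤ → A) (s : ℤ) : Prop :=
  ∀ i : ℕ, ∀ hi : i < w.length, x (s + i) = w.get ⟨i, hi⟩

lemma MatchesAt.congr {w : List A} {x y : ℤ → A} {s : ℤ} (h : MatchesAt w x s)
    (hxy : ∀ i ∈ Finset.Ico s (s + w.length), x i = y i) : MatchesAt w y s := fun i hi =>
  hxy (s + i) (Finset.mem_Ico.2 ⟨by omega, by omega⟩) ▸ h i hi

lemma MatchesAt.eq_of_mem_Ico {w : List A} {x y : ℤ → A} {s i : ℤ} (hx : MatchesAt w x s)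
    (hy : MatchesAt w y s) (hi : i ∈ Finset.Ico s (s + w.length)) : x i = y i := by
  rw [Finset.mem_Ico] at hi
  have hk : (i - s).toNat < w.length := by omega
  have hsk : s + ((i - s).toNat : ℕ) = i := by omega
  rw [← hsk, hx _ hk, hy _ hk]

lemma matchesAt_ofFn (x : ℤ → A) (s : ℤ) (n : ℕ) :
    MatchesAt (List.ofFn fun i : Fin n => x (s + i)) x s := by
  intro i hi
  simp

lemma MatchesAt.take {w : List A} {x : ℤ → A} {s : ℤ} (h : MatchesAt w x s) (m : ℕ) :
    MatchesAt (w.take m) x s := by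
  intro i hi
  rw [List.length_take] at hi
  simpa using h i (by omega)

lemma MatchesAt.drop {w : List A} {x : ℤ → A} {s : ℤ} (h : MatchesAt w x s) (m : ℕ) :
    MatchesAt (w.drop m) x (s + m) := by
  intro i hi
  rw [List.length_drop] at hi
  simpa [add_assoc] using h (m + i) (by omega)

end Words

section Admissible

variable {A : Type*} {F : Set (List A)} {d : A}

/-- Patterns on a finite window `T` in which no forbidden word occurs, encoded as configurations
equal to the filler letter `d` off `T`. -/
def admissible (F : Set (List A)) (d : A) (T : Finset ℤ) : Set (ℤ → A) :=
  {x | (∀ i ∉ T, x i = d) ∧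
    ∀ f ∈ F, ∀ s : ℤ, Finset.Ico s (s + f.length) ⊆ T → ¬ MatchesAt f x s}

lemma piecewise_mem_admissible {S T : Finset ℤ} {x : ℤ → A} (hx : x ∈ admissible F d T)
    (hST : S ⊆ T) : S.piecewise x (fun _ => d) ∈ admissible F d S := by
  refine ⟨fun i hi => Finset.piecewise_eq_of_notMem _ _ _ hi, fun f hf s hfS hmatch => ?_⟩
  refine hx.2 f hf s (hfS.trans hST) (hmatch.congr fun i hi => ?_)
  exact Finset.piecewise_eq_of_mem _ _ _ (hfS hi)

lemma admissible_finite [Finite A] (T : Finset ℤ) : (admissible F d T).Finite := by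
  refine Finite.of_injective (fun x : admissible F d T => fun i : T => (x : ℤ → A) i) ?_
  intro x y hxy
  ext i
  by_cases hi : i ∈ T
  · exact congrFun hxy ⟨i, hi⟩
  · rw [x.2.1 i hi, y.2.1 i hi]

lemma admissible_empty (hne : ∀ f ∈ F, f ≠ []) : admissible F d ∅ = {fun _ => d} := by
  ext x
  refine ⟨fun hx => funext fun i => hx.1 i (Finset.notMem_empty i), ?_⟩
  rintro rfl
  refine ⟨fun _ _ => rfl, fun f hf s hfs _ => hne f hf ?_⟩
  rw [Finset.subset_empty, Finset.Ico_eq_empty_iff] at hfs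
  exact List.length_eq_zero_iff.1 (by omega)

lemma ncard_le_ncard_admissible_sdiff [Finite A] {T W : Finset ℤ} {B : Set (ℤ → A)}
    (hB : B ⊆ admissible F d T) (hW : ∀ x ∈ B, ∀ y ∈ B, ∀ i ∈ W, x i = y i) :
    B.ncard ≤ (admissible F d (T \ W)).ncard := by
  refine ncard_le_ncard_of_injOn (fun x => (T \ W).piecewise x fun _ => d)
    (fun x hx => piecewise_mem_admissible (hB hx) Finset.sdiff_subset) (fun x hx y hy hxy => ?_)
    (admissible_finite _)
  funext i
  by_cases hiW : i ∈ W
  · exact hW x hx y hy i hiW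
  by_cases hiT : i ∈ T
  · simpa [Finset.piecewise, hiT, hiW] using congrFun hxy i
  · rw [(hB hx).1 i hiT, (hB hy).1 i hiT]

end Admissible

section Growth

variable {A : Type*} {F : Set (List A)} {d : A} {T : Finset ℤ} {g : ℤ}

lemma injOn_update (hg : g ∉ T) :
    InjOn (fun p : (ℤ → A) × A => Function.update p.1 g p.2) (admissible F d T ×ˢ univ) := by
  rintro ⟨x, c⟩ ⟨hx, -⟩ ⟨y, c'⟩ ⟨hy, -⟩ hxy
  refine Prod.ext (funext fun i => ?_) (by simpa using congrFun hxy g)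
  by_cases hig : i = g
  · rw [hig, hx.1 g hg, hy.1 g hg]
  · simpa [Function.update_of_ne hig] using congrFun hxy i

lemma exists_forbidden_through {x : ℤ → A} {c : A} (hx : x ∈ admissible F d T)
    (hc : Function.update x g c ∉ admissible F d (insert g T)) :
    ∃ f ∈ F, ∃ s ∈ Finset.Ioc (g - f.length) g,
      Finset.Ico s (s + f.length) ⊆ insert g T ∧ MatchesAt f (Function.update x g c) s := by
  have hoff : ∀ i ∉ insert g T, Function.update x g c i = d := fun i hi => by
    rw [Finset.mem_insert, not_or] at hi
    rw [Function.update_of_ne hi.1, hx.1 i hi.2]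
  have hbad : ¬ ∀ f ∈ F, ∀ s : ℤ, Finset.Ico s (s + f.length) ⊆ insert g T →
      ¬ MatchesAt f (Function.update x g c) s := fun h => hc ⟨hoff, h⟩
  push Not at hbad
  obtain ⟨f, hf, s, hsub, hmatch⟩ := hbad
  refine ⟨f, hf, s, Finset.mem_Ioc.2 ?_, hsub, hmatch⟩
  by_contra hs
  have hgs : ∀ i ∈ Finset.Ico s (s + f.length), i ≠ g := fun i hi hig => by
    rw [Finset.mem_Ico] at hi
    omega
  refine hx.2 f hf s (fun i hi => ?_)
    (hmatch.congr fun i hi => Function.update_of_ne (hgs i hi) _ _)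
  exact (Finset.mem_insert.1 (hsub hi)).resolve_left (hgs i hi)

def badExtensions (F : Set (List A)) (d : A) (T : Finset ℤ) (g : ℤ) (f : List A) (s : ℤ) :
    Set ((ℤ → A) × A) :=
  {p ∈ admissible F d T ×ˢ univ | Finset.Ico s (s + f.length) ⊆ insert g T ∧
    MatchesAt f (Function.update p.1 g p.2) s}

lemma ncard_badExtensions_le [Finite A] {f : List A} {s : ℤ} (hg : g ∉ T)
    (hgf : g ∈ Finset.Ico s (s + f.length)) :
    (badExtensions F d T g f s).ncard ≤
      (admissible F d (T \ Finset.Ico s (s + f.length))).ncard := by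
  have hfst : InjOn Prod.fst (badExtensions F d T g f s) := fun p hp q hq hpq =>
    Prod.ext hpq (by simpa using hp.2.2.eq_of_mem_Ico hq.2.2 hgf)
  rw [← hfst.ncard_image]
  refine ncard_le_ncard_admissible_sdiff (by rintro _ ⟨p, hp, rfl⟩; exact hp.1.1) ?_
  rintro _ ⟨p, hp, rfl⟩ _ ⟨q, hq, rfl⟩ i hi
  by_cases hig : i = g
  · rw [hig, hp.1.1.1 g hg, hq.1.1.1 g hg]
  · simpa [Function.update_of_ne hig] using hp.2.2.eq_of_mem_Ico hq.2.2 hi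

/-- Only the `|f| - 1` sites of the occurrence other than `g` are pinned down inside `T`. -/
lemma pow_mul_ncard_badExtensions_le [Finite A] {γ : ℝ} (hγ : 0 ≤ γ) {f : List A} {s : ℤ}
    (hg : g ∉ T) (hs : s ∈ Finset.Ioc (g - f.length) g)
    (hchain : ∀ W ⊆ T,
      γ ^ W.card * (admissible F d (T \ W)).ncard ≤ (admissible F d T).ncard) :
    γ ^ (f.length - 1) * (badExtensions F d T g f s).ncard ≤ (admissible F d T).ncard := by
  set I := Finset.Ico s (s + f.length)
  by_cases hsub : I ⊆ insert g T
  swap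
  · rw [show badExtensions F d T g f s = ∅ from
      eq_empty_of_forall_notMem fun p hp => hsub hp.2.1, ncard_empty, Nat.cast_zero, mul_zero]
    positivity
  have hgf : g ∈ I := by
    rw [Finset.mem_Ioc] at hs
    rw [Finset.mem_Ico]
    omega
  have hW : I.erase g ⊆ T := fun i hi =>
    (Finset.mem_insert.1 (hsub (Finset.mem_of_mem_erase hi))).resolve_left
      (Finset.ne_of_mem_erase hi)
  have hsdiff : T \ I.erase g = T \ I := by
    ext i
    by_cases hig : i = g
    · simp [hig, hg]
    · simp [hig]
  have hcard : (I.erase g).card = f.length - 1 := by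
    rw [Finset.card_erase_of_mem hgf, Int.card_Ico]
    omega
  calc γ ^ (f.length - 1) * ((badExtensions F d T g f s).ncard : ℝ)
      ≤ γ ^ (f.length - 1) * (admissible F d (T \ I)).ncard := by
        gcongr
        exact ncard_badExtensions_le hg hgf
    _ ≤ (admissible F d T).ncard := by
        simpa [hsdiff, hcard] using hchain _ hW

lemma card_mul_ncard_admissible_le [Fintype A] (hg : g ∉ T) (M : Finset (List A))
    (hM : ∀ f ∈ F, f.length ≤ T.card + 1 → f ∈ M) :
    Fintype.card A * (admissible F d T).ncard ≤ (admissible F d (insert g T)).ncard +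
      ∑ f ∈ M, ∑ s ∈ Finset.Ioc (g - f.length) g, (badExtensions F d T g f s).ncard := by
  classical
  set P := admissible F d T ×ˢ (univ : Set A)
  set good := {p ∈ P | Function.update p.1 g p.2 ∈ admissible F d (insert g T)}
  set idx := M.sigma fun f => Finset.Ioc (g - f.length) g
  have hPfin : P.Finite := (admissible_finite T).prod finite_univ
  have hcover : P ⊆ good ∪ ⋃ fs ∈ idx, badExtensions F d T g fs.1 fs.2 := by
    intro p hp
    by_cases hgood : Function.update p.1 g p.2 ∈ admissible F d (insert g T)
    · exact Or.inl ⟨hp, hgood⟩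
    obtain ⟨f, hf, s, hs, hsub, hmatch⟩ := exists_forbidden_through hp.1 hgood
    have hlen : f.length ≤ T.card + 1 := by
      simpa [Finset.card_insert_of_notMem hg] using Finset.card_le_card hsub
    exact Or.inr <| mem_iUnion₂.2
      ⟨⟨f, s⟩, Finset.mem_sigma.2 ⟨hM f hf hlen, hs⟩, hp, hsub, hmatch⟩
  have hgood : good.ncard ≤ (admissible F d (insert g T)).ncard :=
    ncard_le_ncard_of_injOn (fun p => Function.update p.1 g p.2) (fun p hp => hp.2)
      ((injOn_update hg).mono (sep_subset _ _)) (admissible_finite (insert g T))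
  have hfin : (good ∪ ⋃ fs ∈ idx, badExtensions F d T g fs.1 fs.2).Finite :=
    (hPfin.subset (sep_subset _ _)).union
      (hPfin.subset (iUnion₂_subset fun _ _ => sep_subset _ _))
  calc Fintype.card A * (admissible F d T).ncard = P.ncard := by
        rw [ncard_prod, ncard_univ, Nat.card_eq_fintype_card, mul_comm]
    _ ≤ good.ncard + (⋃ fs ∈ idx, badExtensions F d T g fs.1 fs.2).ncard :=
        (ncard_le_ncard hcover hfin).trans (ncard_union_le _ _)
    _ ≤ _ := by
        rw [Finset.sum_sigma']
        exact add_le_add hgood (Finset.set_ncard_biUnion_le idx _)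

end Growth

section Criterion

variable {A : Type*} [Fintype A] {F : Set (List A)} {d : A} {γ : ℝ}

-- Stated over finite subfamilies, so that no summability over `F` is presupposed.
def CountingCondition (F : Set (List A)) (γ : ℝ) : Prop :=
  ∀ M : Finset (List A), ↑M ⊆ F →
    ∑ f ∈ M, f.length * γ⁻¹ ^ (f.length - 1) ≤ Fintype.card A - γ

lemma mul_ncard_admissible_le_insert_of_chain (hγ : 0 < γ) (hbudget : CountingCondition F γ)
    {T : Finset ℤ} {g : ℤ} (hg : g ∉ T)
    (hchain : ∀ W ⊆ T,
      γ ^ W.card * (admissible F d (T \ W)).ncard ≤ (admissible F d T).ncard) :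
    γ * (admissible F d T).ncard ≤ (admissible F d (insert g T)).ncard := by
  classical
  set Fg := ((List.finite_length_le A (T.card + 1)).subset
    fun f (hf : f ∈ F ∧ f.length ≤ T.card + 1) => hf.2).toFinset
  have hcount : (Fintype.card A : ℝ) * (admissible F d T).ncard ≤
      (admissible F d (insert g T)).ncard + ∑ f ∈ Fg,
        ∑ s ∈ Finset.Ioc (g - f.length) g, ((badExtensions F d T g f s).ncard : ℝ) := by
    exact_mod_cast card_mul_ncard_admissible_le hg Fg fun f hf hlen =>
      (Finite.mem_toFinset _).2 ⟨hf, hlen⟩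
  have hbad : ∀ f ∈ Fg,
      ∑ s ∈ Finset.Ioc (g - f.length) g, ((badExtensions F d T g f s).ncard : ℝ) ≤
        f.length * γ⁻¹ ^ (f.length - 1) * (admissible F d T).ncard := by
    intro f _
    calc ∑ s ∈ Finset.Ioc (g - f.length) g, ((badExtensions F d T g f s).ncard : ℝ)
        ≤ ∑ s ∈ Finset.Ioc (g - f.length) g,
            γ⁻¹ ^ (f.length - 1) * (admissible F d T).ncard := by
          refine Finset.sum_le_sum fun s hs => ?_
          rw [inv_pow, ← div_eq_inv_mul, le_div_iff₀ (by positivity), mul_comm]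
          exact pow_mul_ncard_badExtensions_le hγ.le hg hs hchain
      _ = f.length * γ⁻¹ ^ (f.length - 1) * (admissible F d T).ncard := by
          simp [Int.card_Ioc, mul_assoc]
  have hsum := (Finset.sum_le_sum hbad).trans_eq (Finset.sum_mul ..).symm
  have hbudgetT := mul_le_mul_of_nonneg_right
    (hbudget Fg fun f hf => ((Finite.mem_toFinset _).1 (Finset.mem_coe.1 hf)).1)
    (Nat.cast_nonneg (admissible F d T).ncard)
  linarith

lemma mul_ncard_admissible_le_insert (hγ : 0 < γ) (hbudget : CountingCondition F γ)
    (T : Finset ℤ) {g : ℤ} (hg : g ∉ T) :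
    γ * (admissible F d T).ncard ≤ (admissible F d (insert g T)).ncard := by
  induction T using Finset.strongInduction generalizing g with
  | H T ih =>
    refine mul_ncard_admissible_le_insert_of_chain hγ hbudget hg fun W hW => ?_
    refine pow_card_mul_le_of_forall_insert (N := fun T => ((admissible F d T).ncard : ℝ)) hγ.le
      (fun S hS g' hg'T hg'S => ?_) hW
    exact ih S ((Finset.ssubset_iff_of_subset hS).2 ⟨g', hg'T, hg'S⟩) hg'S

lemma pow_card_mul_ncard_admissible_sdiff_le (hγ : 0 < γ) (hbudget : CountingCondition F γ)
    {T W : Finset ℤ} (hW : W ⊆ T) :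
    γ ^ W.card * (admissible F d (T \ W)).ncard ≤ (admissible F d T).ncard :=
  pow_card_mul_le_of_forall_insert (N := fun T => ((admissible F d T).ncard : ℝ)) hγ.le
    (fun S _ _ _ hg => mul_ncard_admissible_le_insert hγ hbudget S hg) hW

lemma pow_card_le_ncard_admissible (hne : ∀ f ∈ F, f ≠ []) (hγ : 0 < γ)
    (hbudget : CountingCondition F γ) (T : Finset ℤ) :
    γ ^ T.card ≤ (admissible F d T).ncard := by
  simpa [admissible_empty hne] using
    pow_card_mul_ncard_admissible_sdiff_le (d := d) hγ hbudget (subset_refl T)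

end Criterion

section Language

variable {A : Type*} {F : Set (List A)} {d : A}

lemma lang_finite [Finite A] (X : Set (ℤ → A)) (n : ℕ) : (lang X n).Finite :=
  (List.finite_length_eq A n).subset fun _ hw => hw.1

noncomputable def centralWindow (n k : ℕ) : Finset ℤ := Finset.Ico (-k : ℤ) (n + k)

lemma centralWindow_mono (n : ℕ) : Monotone (centralWindow n) := fun k k' hkk' i hi => by
  simp only [centralWindow, Finset.mem_Ico] at hi ⊢
  omega

def centralWords (F : Set (List A)) (d : A) (n k : ℕ) : Set (List A) :=
  {w | w.length = n ∧ ∃ x ∈ admissible F d (centralWindow n k), MatchesAt w x 0}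

lemma centralWords_finite [Finite A] (n k : ℕ) : (centralWords F d n k).Finite :=
  (List.finite_length_eq A n).subset fun _ hw => hw.1

lemma centralWords_antitone (n : ℕ) : Antitone (centralWords F d n) := by
  rintro k k' hkk' w ⟨hw, x, hx, hmatch⟩
  refine ⟨hw, _, piecewise_mem_admissible hx (centralWindow_mono n hkk'),
    hmatch.congr fun i hi => (Finset.piecewise_eq_of_mem _ _ _ ?_).symm⟩
  simp only [centralWindow, Finset.mem_Ico, hw] at hi ⊢
  omega

lemma pow_le_ncard_centralWords [Fintype A] {γ : ℝ} (hne : ∀ f ∈ F, f ≠ []) (hγ : 0 < γ)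
    (hbudget : CountingCondition F γ) (n k : ℕ) : γ ^ n ≤ (centralWords F d n k).ncard := by
  classical
  set T := centralWindow n k
  set S := Finset.Ico (0 : ℤ) n
  set words := (centralWords_finite (F := F) (d := d) n k).toFinset
  have hST : S ⊆ T := fun i hi => by
    simp only [S, T, centralWindow, Finset.mem_Ico] at hi ⊢
    omega
  have hcover :
      admissible F d T ⊆ ⋃ w ∈ words, {x ∈ admissible F d T | MatchesAt w x 0} := by
    intro x hx
    have hread := matchesAt_ofFn x 0 n
    exact mem_iUnion₂.2
      ⟨_, (Finite.mem_toFinset _).2 ⟨List.length_ofFn, x, hx, hread⟩, hx, hread⟩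
  have hupper : (admissible F d T).ncard ≤ words.card * (admissible F d (T \ S)).ncard := by
    calc (admissible F d T).ncard
        ≤ ∑ w ∈ words, {x ∈ admissible F d T | MatchesAt w x 0}.ncard :=
          (ncard_le_ncard hcover ((admissible_finite T).subset
            (iUnion₂_subset fun _ _ => sep_subset _ _))).trans (Finset.set_ncard_biUnion_le _ _)
      _ ≤ ∑ w ∈ words, (admissible F d (T \ S)).ncard := by
          refine Finset.sum_le_sum fun w hw => ncard_le_ncard_admissible_sdiff (sep_subset _ _)
            fun x hx y hy i hi => hx.2.eq_of_mem_Ico hy.2 ?_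
          rwa [((Finite.mem_toFinset _).1 hw).1, zero_add]
      _ = _ := by rw [Finset.sum_const, smul_eq_mul]
  have hchain : γ ^ n * (admissible F d (T \ S)).ncard ≤ (admissible F d T).ncard := by
    simpa [S] using pow_card_mul_ncard_admissible_sdiff_le hγ hbudget hST
  have hpos : (0 : ℝ) < (admissible F d (T \ S)).ncard :=
    (pow_pos hγ _).trans_le (pow_card_le_ncard_admissible hne hγ hbudget _)
  rw [ncard_eq_toFinset_card _ (centralWords_finite n k)]
  exact le_of_mul_le_mul_right (hchain.trans (by exact_mod_cast hupper)) hpos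

lemma isClopen_setOf_matchesAt [TopologicalSpace A] [DiscreteTopology A] (w : List A) (s : ℤ) :
    IsClopen {x : ℤ → A | MatchesAt w x s} := by
  have : {x : ℤ → A | MatchesAt w x s} =
      (fun x (i : Fin w.length) => x (s + i)) ⁻¹' {w.get} := by
    ext x
    simp only [mem_ofPred_eq, mem_preimage, mem_singleton_iff, funext_iff]
    exact ⟨fun h i => h i i.2, fun h i hi => h ⟨i, hi⟩⟩
  rw [this]
  exact (isClopen_discrete _).preimage (continuous_pi fun i => continuous_apply _)

lemma mem_lang_of_forall_mem_centralWords [Finite A] {n : ℕ} {w : List A}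
    (hw : ∀ k, w ∈ centralWords F d n k) : w ∈ lang (zShift F) n := by
  -- `ℤ → A` with the product of discrete topologies is compact.
  let _ : TopologicalSpace A := ⊥
  have _ : DiscreteTopology A := ⟨rfl⟩
  set C : ℕ → Set (ℤ → A) := fun k => {x | MatchesAt w x 0} ∩
    ⋂ f ∈ F, ⋂ s : ℤ, ⋂ (_ : Finset.Ico s (s + f.length) ⊆ centralWindow n k),
      {x | MatchesAt f x s}ᶜ
  have hC : ∀ k x, x ∈ C k ↔ MatchesAt w x 0 ∧ ∀ f ∈ F, ∀ s : ℤ,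
      Finset.Ico s (s + f.length) ⊆ centralWindow n k → ¬ MatchesAt f x s := by
    intro k x
    simp only [C, mem_inter_iff, mem_iInter, mem_compl_iff, mem_ofPred_eq]
  have hclosed : ∀ k, IsClosed (C k) := fun k =>
    (isClopen_setOf_matchesAt w 0).isClosed.inter (isClosed_biInter fun f _ =>
      isClosed_iInter fun s => isClosed_iInter fun _ =>
        (isClopen_setOf_matchesAt f s).compl.isClosed)
  have hanti : ∀ k, C (k + 1) ⊆ C k := fun k x hx => by
    rw [hC] at hx ⊢
    exact ⟨hx.1, fun f hf s hs => hx.2 f hf s (hs.trans (centralWindow_mono n k.le_succ))⟩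
  have hnonempty : ∀ k, (C k).Nonempty := fun k => by
    obtain ⟨-, x, hx, hmatch⟩ := hw k
    exact ⟨x, (hC k x).2 ⟨hmatch, hx.2⟩⟩
  obtain ⟨x, hx⟩ := IsCompact.nonempty_iInter_of_sequence_nonempty_isCompact_isClosed C hanti
    hnonempty (hclosed 0).isCompact hclosed
  rw [mem_iInter] at hx
  refine ⟨(hw 0).1, x, fun f hf ⟨s, hs⟩ => ?_, 0, ((hC 0 x).1 (hx 0)).1⟩
  have hsub : Finset.Ico s (s + f.length) ⊆ centralWindow n (s.natAbs + f.length) := by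
    intro i hi
    simp only [centralWindow, Finset.mem_Ico] at hi ⊢
    omega
  exact ((hC _ x).1 (hx _)).2 f hf s hsub hs

theorem pow_le_ncard_lang_zShift [Fintype A] [Nonempty A] {γ : ℝ} (hne : ∀ f ∈ F, f ≠ [])
    (hγ : 0 < γ) (hbudget : CountingCondition F γ) (n : ℕ) :
    γ ^ n ≤ (lang (zShift F) n).ncard := by
  obtain ⟨d⟩ := ‹Nonempty A›
  obtain ⟨K, hK⟩ := exists_forall_subset_of_antitone (centralWords_antitone (F := F) (d := d) n)
    (centralWords_finite n 0)
  calc γ ^ n ≤ (centralWords F d n K).ncard := pow_le_ncard_centralWords hne hγ hbudget n K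
    _ ≤ (lang (zShift F) n).ncard := by
      exact_mod_cast ncard_le_ncard
        (fun w hw => mem_lang_of_forall_mem_centralWords fun k => hK k hw) (lang_finite _ n)

end Language

section Entropy

variable {A : Type*}

lemma ncard_lang_add_le [Finite A] (X : Set (ℤ → A)) (m n : ℕ) :
    (lang X (m + n)).ncard ≤ (lang X m).ncard * (lang X n).ncard := by
  rw [← ncard_prod]
  refine ncard_le_ncard_of_injOn (fun w => (w.take m, w.drop m)) ?_ ?_
    ((lang_finite X m).prod (lang_finite X n))
  · rintro w ⟨hw, x, hx, s, hs⟩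
    exact ⟨⟨by simp [hw], x, hx, s, MatchesAt.take (w := w) hs m⟩,
      ⟨by simp [hw], x, hx, s + m, MatchesAt.drop (w := w) hs m⟩⟩
  · intro w₁ _ w₂ _ h
    simp only [Prod.mk.injEq] at h
    rw [← List.take_append_drop m w₁, h.1, h.2, List.take_append_drop]

lemma exists_tendsto_log_ncard_lang_div [Finite A] (X : Set (ℤ → A)) {γ : ℝ} (hγ : 0 < γ)
    (hX : ∀ n, γ ^ n ≤ (lang X n).ncard) :
    ∃ h₀ : ℝ, Tendsto (fun n : ℕ => Real.log ((lang X n).ncard) / n) atTop (nhds h₀) ∧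
      Real.log γ ≤ h₀ := by
  have hpos : ∀ n, (0 : ℝ) < (lang X n).ncard := fun n => (pow_pos hγ n).trans_le (hX n)
  have hsub : Subadditive fun n => Real.log ((lang X n).ncard) := fun m n => by
    rw [← Real.log_mul (hpos m).ne' (hpos n).ne']
    exact Real.log_le_log (hpos _) (by exact_mod_cast ncard_lang_add_le X m n)
  have hlow : ∀ n : ℕ, 0 < n → Real.log γ ≤ Real.log ((lang X n).ncard) / n := by
    intro n hn
    rw [le_div_iff₀ (by exact_mod_cast hn), mul_comm, ← Real.log_pow]
    exact Real.log_le_log (pow_pos hγ n) (hX n)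
  have hbdd : BddBelow (range fun n : ℕ => Real.log ((lang X n).ncard) / n) := by
    refine ⟨min (Real.log γ) 0, ?_⟩
    rintro _ ⟨n, rfl⟩
    rcases n.eq_zero_or_pos with rfl | hn
    · simp
    · exact (min_le_left _ _).trans (hlow n hn)
  exact ⟨hsub.lim, hsub.tendsto_lim hbdd,
    ge_of_tendsto (hsub.tendsto_lim hbdd) (eventually_atTop.2 ⟨1, hlow⟩)⟩

end Entropy

section Budget

variable {A : Type*} [Finite A] {F : Set (List A)}

lemma sum_pow_length_le_tsum (hne : ∀ f ∈ F, f ≠ []) {r : ℝ} (hr : 0 ≤ r)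
    (hsum : Summable fun n : ℕ => (({f ∈ F | f.length = n + 1}).ncard : ℝ) * r ^ (n + 1))
    {M : Finset (List A)} (hM : ↑M ⊆ F) :
    ∑ f ∈ M, r ^ f.length ≤
      ∑' n : ℕ, (({f ∈ F | f.length = n + 1}).ncard : ℝ) * r ^ (n + 1) := by
  classical
  have hlen : ∀ f ∈ M, f.length - 1 + 1 = f.length := fun f hf =>
    Nat.sub_add_cancel (List.length_pos_iff.2 (hne f (hM hf)))
  calc ∑ f ∈ M, r ^ f.length = ∑ f ∈ M, r ^ (f.length - 1 + 1) :=
        Finset.sum_congr rfl fun f hf => by rw [hlen f hf]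
    _ = ∑ L ∈ M.image (·.length - 1), ({f ∈ M | f.length - 1 = L}.card : ℝ) * r ^ (L + 1) := by
        simpa only [nsmul_eq_mul] using
          Finset.sum_comp (fun L => r ^ (L + 1)) fun f : List A => f.length - 1
    _ ≤ ∑ L ∈ M.image (·.length - 1),
          (({f ∈ F | f.length = L + 1}).ncard : ℝ) * r ^ (L + 1) := by
        gcongr with L
        rw [← ncard_coe_finset]
        refine ncard_le_ncard (fun f hf => ?_) ((List.finite_length_eq A _).subset fun _ hf => hf.2)
        obtain ⟨hfM, rfl⟩ := Finset.mem_filter.1 hf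
        exact ⟨hM hfM, (hlen f hfM).symm⟩
    _ ≤ _ := hsum.sum_le_tsum _ fun _ _ => by positivity

/-- Bernoulli's inequality `L ≤ (14/5)^(L-1)` is what turns the weight `|f| γ^(1-|f|)` into
`(3/|A|)^(|f|-1)` once `γ ≥ 14|A|/15`. -/
lemma natCast_mul_inv_pow_pred_le {a γ : ℝ} (ha : 0 < a) (hγ : 14 * a ≤ 15 * γ) {L : ℕ}
    (hL : 1 ≤ L) : L * γ⁻¹ ^ (L - 1) ≤ a / 3 * (3 / a) ^ L := by
  obtain ⟨m, rfl⟩ := Nat.exists_eq_add_of_le' hL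
  have hγpos : 0 < γ := by linarith
  have hbern : (m : ℝ) + 1 ≤ (14 / 5) ^ m := by
    have := one_add_mul_le_pow (a := (9 / 5 : ℝ)) (by norm_num) m
    norm_num at this
    linarith [(m.cast_nonneg : (0 : ℝ) ≤ m)]
  calc ((m + 1 : ℕ) : ℝ) * γ⁻¹ ^ (m + 1 - 1) = (m + 1) * γ⁻¹ ^ m := by simp
    _ ≤ (14 / 5) ^ m * γ⁻¹ ^ m := by gcongr
    _ = (14 / 5 * γ⁻¹) ^ m := (mul_pow _ _ _).symm
    _ ≤ (3 / a) ^ m := by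
        gcongr
        rw [← div_eq_mul_inv, div_div, div_le_div_iff₀ (by positivity) ha]
        linarith
    _ = a / 3 * (3 / a) ^ (m + 1) := by
        rw [pow_succ]
        field_simp

end Budget

/-- Improvement of Pavlov's Theorem 7.1: if `∑_{n≥1} |F_n|·(3/|A|)^n < 1/5`, where `F_n`
is the set of forbidden words of length `n`, then `h(X_F) > log(14|A|/15)`. -/
theorem entropy_gt_of_small_sum {A : Type*} [Fintype A] [Nonempty A]
    (F : Set (List A)) (hne : ∀ f ∈ F, f ≠ [])
    (hsum : Summable fun n : ℕ =>
      (({f ∈ F | f.length = n + 1}).ncard : ℝ) * (3 / (Fintype.card A : ℝ)) ^ (n + 1))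
    (hcond : ∑' n : ℕ,
      (({f ∈ F | f.length = n + 1}).ncard : ℝ) * (3 / (Fintype.card A : ℝ)) ^ (n + 1)
        < 1 / 5) :
    ∃ h₀ : ℝ, Filter.Tendsto
        (fun n : ℕ => Real.log ((lang (zShift F) n).ncard) / n)
        Filter.atTop (nhds h₀) ∧
      Real.log (14 * (Fintype.card A : ℝ) / 15) < h₀ := by
  set a : ℝ := (Fintype.card A : ℝ)
  set S := ∑' n : ℕ, (({f ∈ F | f.length = n + 1}).ncard : ℝ) * (3 / a) ^ (n + 1)
  have ha : 0 < a := Nat.cast_pos.2 Fintype.card_pos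
  -- `|A| - γ = |A| S / 3` is the budget the forbidden words need, and `S < 1/5` puts `γ` above
  -- `14|A|/15`.
  set γ := a - a / 3 * S
  have hγ : 14 * a / 15 < γ := by
    show 14 * a / 15 < a - a / 3 * S
    nlinarith [mul_lt_mul_of_pos_left hcond ha]
  have hbudget : CountingCondition F γ := fun M hM =>
    calc ∑ f ∈ M, f.length * γ⁻¹ ^ (f.length - 1)
        ≤ ∑ f ∈ M, a / 3 * (3 / a) ^ f.length :=
          Finset.sum_le_sum fun f hf => natCast_mul_inv_pow_pred_le ha (by linarith)
            (List.length_pos_iff.2 (hne f (hM hf)))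
      _ ≤ a / 3 * S := by
          rw [← Finset.mul_sum]
          gcongr
          exact sum_pow_length_le_tsum hne (by positivity) hsum hM
      _ = a - γ := by simp only [γ]; ring
  obtain ⟨h₀, hlim, hle⟩ := exists_tendsto_log_ncard_lang_div (zShift F) (by linarith)
    (pow_le_ncard_lang_zShift hne (by linarith) hbudget)
  exact ⟨h₀, hlim, (Real.log_lt_log (by positivity) hγ).trans_le hle⟩
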